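/- The standard simplicial interval $\Delta[1]$ admits a unique simplicial monoid structure with unit $(1) \in \Delta[1]_0$: the multiplication in degree $n$ sends a pair of monotone maps $(f,g) : [n] \to [1]$ to their pointwise minimum $\min(f,g)$, and this is the only simplicial monoid structure on $\Delta[1]$ with unit the vertex $1$. -/

import Mathlib

/-- The standard simplicial interval `Δ[1]`: its `n`-simplices are the monotone maps
`[n] → [1]`, i.e. monotone maps `Fin (n+1) → Fin 2`. -/
def D1 (n : ℕ) : Type := { f : Fin (n + 1) → Fin 2 // Monotone f }

/-- Face operators of `Δ[1]`: precomposition with the coface `δ_j`. -/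
def D1d (n : ℕ) (j : Fin (n + 2)) (f : D1 (n + 1)) : D1 n :=
  ⟨f.1 ∘ j.succAbove, f.2.comp (Fin.strictMono_succAbove j).monotone⟩

/-- Degeneracy operators of `Δ[1]`: precomposition with the codegeneracy `σ_j`. -/
def D1s (n : ℕ) (j : Fin (n + 1)) (f : D1 n) : D1 (n + 1) :=
  ⟨f.1 ∘ j.predAbove, f.2.comp (Fin.predAbove_right_monotone j)⟩

/-- The vertex `(1)` of `Δ[1]`, degenerated to degree `n`: the unit of the monoid
structure. -/
def D1one (n : ℕ) : D1 n := ⟨fun _ => 1, monotone_const⟩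

/-- The pointwise minimum: the multiplication of the simplicial monoid `Δ[1]`. -/
def D1mul (n : ℕ) (f g : D1 n) : D1 n := ⟨fun i => min (f.1 i) (g.1 i), f.2.min g.2⟩

/-
The pointwise minimum visibly commutes with precomposition, so existence is immediate.
For uniqueness, every vertex of `[n + 1]` survives some face map `δ_j`, so a
multiplication compatible with faces is computed vertex by vertex by its degree-0 part,
a binary operation on `Δ[1]_0 = {0, 1}` with unit `1`. The one remaining value `0 · 0`
is forced to be `0` by monotonicity of the product of the 1-simplices `0 → 1` and
`0 → 0`, whose last vertex is `1 · 0 = 0`.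
-/

namespace D1

def const (n : ℕ) (a : Fin 2) : D1 n := ⟨fun _ => a, monotone_const⟩

def vertex {n : ℕ} (f : D1 n) (i : Fin (n + 1)) : D1 0 := const 0 (f.1 i)

theorem vertex_zero (f : D1 0) : vertex f 0 = f :=
  Subtype.ext <| funext fun i => by rw [Fin.fin_one_eq_zero i]; rfl

theorem vertex_D1d {n : ℕ} (j : Fin (n + 2)) (f : D1 (n + 1)) (i : Fin (n + 1)) :
    vertex (D1d n j f) i = vertex f (j.succAbove i) :=
  rfl

theorem vertex_mul_of_comm_faces (m : ∀ n, D1 n → D1 n → D1 n)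
    (hd : ∀ n (j : Fin (n + 2)) (f g : D1 (n + 1)),
      D1d n j (m (n + 1) f g) = m n (D1d n j f) (D1d n j g)) :
    ∀ n (f g : D1 n) (i : Fin (n + 1)), vertex (m n f g) i = m 0 (vertex f i) (vertex g i)
  | 0, f, g, i => by
    rw [Fin.fin_one_eq_zero i, vertex_zero, vertex_zero, vertex_zero]
  | n + 1, f, g, i => by
    obtain ⟨j, hji⟩ := exists_ne i
    obtain ⟨k, rfl⟩ := Fin.exists_succAbove_eq hji.symm
    rw [← vertex_D1d, hd, vertex_mul_of_comm_faces m hd n, vertex_D1d, vertex_D1d]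

theorem mul_const_zero_of_comm_faces (m : ∀ n, D1 n → D1 n → D1 n)
    (hd : ∀ n (j : Fin (n + 2)) (f g : D1 (n + 1)),
      D1d n j (m (n + 1) f g) = m n (D1d n j f) (D1d n j g))
    (hl : ∀ f, m 0 (D1one 0) f = f) : (m 0 (const 0 0) (const 0 0)).1 0 = 0 := by
  let e : D1 1 := ⟨![0, 1], by decide⟩
  have hmono := (m 1 e (const 1 0)).2 (Fin.zero_le 1)
  have hvertex (i : Fin 2) :
      (m 1 e (const 1 0)).1 i = (m 0 (const 0 (e.1 i)) (const 0 0)).1 0 :=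
    congrArg (·.1 0) (vertex_mul_of_comm_faces m hd 1 e (const 1 0) i)
  rw [hvertex 0, hvertex 1] at hmono
  exact Fin.le_zero_iff.mp (hmono.trans_eq (congrArg (·.1 0) (hl (const 0 0))))

end D1

theorem Fin.two_op_eq_min (op : Fin 2 → Fin 2 → Fin 2) (hl : ∀ b, op 1 b = b)
    (hr : ∀ a, op a 1 = a) (h00 : op 0 0 = 0) (a b : Fin 2) : op a b = min a b := by
  fin_cases a <;> fin_cases b <;> simp [hl, hr, h00]

open D1 in
/-- the pointwise minimum makes `Δ[1]` a simplicial monoid with unit the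
vertex `(1)`, and this is the *unique* simplicial monoid structure on `Δ[1]` with unit
the vertex `(1)`. -/
theorem D1_unique_simplicial_monoid :
    -- min is a simplicial map Δ[1] × Δ[1] → Δ[1]
    (∀ n (j : Fin (n + 2)) (f g : D1 (n + 1)),
      D1d n j (D1mul (n + 1) f g) = D1mul n (D1d n j f) (D1d n j g)) ∧
    (∀ n (j : Fin (n + 1)) (f g : D1 n),
      D1s n j (D1mul n f g) = D1mul (n + 1) (D1s n j f) (D1s n j g)) ∧
    -- the unit is a simplicial point and min is an associative, unital multiplication
    (∀ n (j : Fin (n + 2)), D1d n j (D1one (n + 1)) = D1one n) ∧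
    (∀ n (j : Fin (n + 1)), D1s n j (D1one n) = D1one (n + 1)) ∧
    (∀ n (f g h : D1 n), D1mul n (D1mul n f g) h = D1mul n f (D1mul n g h)) ∧
    (∀ n (f : D1 n), D1mul n (D1one n) f = f) ∧
    (∀ n (f : D1 n), D1mul n f (D1one n) = f) ∧
    -- uniqueness
    (∀ m : ∀ n, D1 n → D1 n → D1 n,
      (∀ n (j : Fin (n + 2)) (f g : D1 (n + 1)),
        D1d n j (m (n + 1) f g) = m n (D1d n j f) (D1d n j g)) →
      (∀ n (j : Fin (n + 1)) (f g : D1 n),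
        D1s n j (m n f g) = m (n + 1) (D1s n j f) (D1s n j g)) →
      (∀ n (f g h : D1 n), m n (m n f g) h = m n f (m n g h)) →
      (∀ n (f : D1 n), m n (D1one n) f = f) →
      (∀ n (f : D1 n), m n f (D1one n) = f) →
      ∀ n f g, m n f g = D1mul n f g) := by
  refine ⟨fun _ _ _ _ => rfl, fun _ _ _ _ => rfl, fun _ _ => rfl, fun _ _ => rfl,
    fun _ _ _ _ => Subtype.ext <| funext fun _ => min_assoc _ _ _,
    fun _ _ => Subtype.ext <| funext fun _ => min_eq_right (Fin.le_last _),
    fun _ _ => Subtype.ext <| funext fun _ => min_eq_left (Fin.le_last _),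
    fun m hd _ _ hl hr n f g => Subtype.ext <| funext fun i => ?_⟩
  have hmin := Fin.two_op_eq_min (fun a b => (m 0 (const 0 a) (const 0 b)).1 0)
    (fun b => congrArg (·.1 0) (hl 0 (const 0 b)))
    (fun a => congrArg (·.1 0) (hr 0 (const 0 a)))
    (mul_const_zero_of_comm_faces m hd (hl 0))
  exact (congrArg (·.1 0) (vertex_mul_of_comm_faces m hd n f g i)).trans (hmin (f.1 i) (g.1 i))
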